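/- arXiv:0707.2329 — 2 statements merged into one kernel-verified Lean document; each statement's English description precedes it below -/
import Mathlib

section
/- Let L : c₀(I) → c₀(J) be a linear isometry, and for each k ∈ I choose j(k) ∈ J with |L(e^k)(j(k))| = 1. Then the map k ↦ j(k) is injective. -/
open scoped ZeroAtInfty

/-- The canonical basis vector `e^k` of `c₀(I)`: the function which is `1` at `k` and `0`
elsewhere. -/
noncomputable def stdBasis {I : Type*} [TopologicalSpace I] [DiscreteTopology I]
    [DecidableEq I] (k : I) : C₀(I, ℂ) :=
  ⟨⟨fun i => if i = k then 1 else 0, continuous_of_discreteTopology⟩, by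
    refine Filter.Tendsto.congr' ?_ tendsto_const_nhds
    filter_upwards [(isCompact_singleton (x := k)).compl_mem_cocompact] with i hi
    simp only [Set.mem_compl_iff, Set.mem_singleton_iff] at hi
    simp [hi]⟩

namespace ZeroAtInftyContinuousMap

variable {α β : Type*} [TopologicalSpace α] [SeminormedAddCommGroup β]

theorem norm_apply_le (f : C₀(α, β)) (x : α) : ‖f x‖ ≤ ‖f‖ :=
  norm_toBCF_eq_norm (f := f) ▸ f.toBCF.norm_coe_le_norm x

theorem norm_le {f : C₀(α, β)} {C : ℝ} (hC : 0 ≤ C) : ‖f‖ ≤ C ↔ ∀ x, ‖f x‖ ≤ C := by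
  rw [← norm_toBCF_eq_norm]
  exact BoundedContinuousFunction.norm_le hC

end ZeroAtInftyContinuousMap

section stdBasis

variable {I : Type*} [TopologicalSpace I] [DiscreteTopology I] [DecidableEq I]

theorem stdBasis_apply (k i : I) : stdBasis k i = if i = k then 1 else 0 := rfl

theorem norm_stdBasis_add_smul_stdBasis_le {k₁ k₂ : I} (hne : k₁ ≠ k₂) {c : ℂ} (hc : ‖c‖ ≤ 1) :
    ‖stdBasis k₁ + c • stdBasis k₂‖ ≤ 1 := by
  refine (ZeroAtInftyContinuousMap.norm_le zero_le_one).2 fun i => ?_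
  simp only [ZeroAtInftyContinuousMap.add_apply, ZeroAtInftyContinuousMap.smul_apply,
    stdBasis_apply, smul_eq_mul]
  by_cases h₁ : i = k₁
  · simp [h₁, hne]
  · split_ifs <;> simp [hc]

end stdBasis

/-- Let `L : c₀(I) → c₀(J)` be a linear isometry, and for each `k ∈ I` choose `j(k) ∈ J`
with `|L(e^k)(j(k))| = 1`.  Then the map `k ↦ j(k)` is injective. -/
theorem stmt5 {I J : Type*} [TopologicalSpace I] [DiscreteTopology I] [DecidableEq I]
    [TopologicalSpace J] [DiscreteTopology J]
    (L : C₀(I, ℂ) →ₗᵢ[ℂ] C₀(J, ℂ)) (j : I → J)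
    (hj : ∀ k : I, ‖L (stdBasis k) (j k)‖ = 1) :
    Function.Injective j := by
  intro k₁ k₂ hk
  by_contra hne
  set a := L (stdBasis k₁) (j k₁)
  set b := L (stdBasis k₂) (j k₂)
  have hb : b ≠ 0 := norm_ne_zero_iff.1 (by simp [b, hj])
  -- Rotating `e^k₂` so that its image agrees with that of `e^k₁` at `j k₁` doubles the value there.
  set f := stdBasis k₁ + (a / b) • stdBasis k₂
  have hf : ‖f‖ ≤ 1 :=
    norm_stdBasis_add_smul_stdBasis_le hne (by simp [a, b, hj])
  have hLf : L f (j k₁) = 2 * a := by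
    have : L f (j k₁) = a + a / b * b := by simp [f, a, b, hk]
    rw [this, div_mul_cancel₀ a hb, two_mul]
  have : (2 : ℝ) ≤ 1 := calc
    2 = ‖L f (j k₁)‖ := by simp [hLf, a, hj]
    _ ≤ ‖L f‖ := (L f).norm_apply_le _
    _ = ‖f‖ := L.norm_map f
    _ ≤ 1 := hf
  norm_num at this
end

section
/- Let S be a compact topological space and B the open unit ball of C(S, ℂ) with the sup norm. For each a ∈ B, the map φ_a(f) = (f + a)/(1 + conj(a)·f) (pointwise operations) is a well-defined bijection of B onto itself with inverse φ_{-a}. -/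
open scoped ComplexConjugate

/-!
Pointwise, `φ_a` is the disc automorphism `z ↦ (z + w)/(1 + w̄ z)` with `w = a s`. The
identity `|1 + w̄ z|² - |z + w|² = (1 - |z|²)(1 - |w|²)` shows that it maps the open unit disc
into itself, and a direct computation shows that `w ↦ -w` inverts it. Compactness of `S` turns
the pointwise bound into `‖φ_a f‖ < 1`.
-/

namespace Complex

noncomputable def diskMobius (w z : ℂ) : ℂ := (z + w) / (1 + conj w * z)

theorem one_add_conj_mul_ne_zero {z w : ℂ} (hz : ‖z‖ < 1) (hw : ‖w‖ < 1) :
    1 + conj w * z ≠ 0 := by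
  intro h
  have hlt : ‖conj w * z‖ < 1 := by
    rw [norm_mul, RCLike.norm_conj]
    exact mul_lt_one_of_nonneg_of_lt_one_left (norm_nonneg w) hw hz.le
  rw [eq_neg_of_add_eq_zero_right h] at hlt
  simp at hlt

theorem normSq_one_add_conj_mul_sub_normSq_add (z w : ℂ) :
    normSq (1 + conj w * z) - normSq (z + w) = (1 - normSq z) * (1 - normSq w) := by
  simp only [normSq_apply, add_re, add_im, mul_re, mul_im, conj_re, conj_im, one_re, one_im]
  ring

theorem normSq_lt_one_of_norm_lt_one {z : ℂ} (hz : ‖z‖ < 1) : normSq z < 1 :=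
  normSq_eq_norm_sq z ▸ pow_lt_one₀ (norm_nonneg z) hz two_ne_zero

theorem norm_diskMobius_lt_one {z w : ℂ} (hz : ‖z‖ < 1) (hw : ‖w‖ < 1) :
    ‖diskMobius w z‖ < 1 := by
  have hD := one_add_conj_mul_ne_zero hz hw
  rw [diskMobius, norm_div, div_lt_one (norm_pos_iff.mpr hD), ← sq_lt_sq₀ (norm_nonneg _)
    (norm_nonneg _), ← normSq_eq_norm_sq, ← normSq_eq_norm_sq, ← sub_pos,
    normSq_one_add_conj_mul_sub_normSq_add]
  exact mul_pos (sub_pos.mpr (normSq_lt_one_of_norm_lt_one hz))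
    (sub_pos.mpr (normSq_lt_one_of_norm_lt_one hw))

theorem diskMobius_neg_diskMobius {z w : ℂ} (hD : 1 + conj w * z ≠ 0) (hw : normSq w ≠ 1) :
    diskMobius (-w) (diskMobius w z) = z := by
  have hw' : 1 - conj w * w ≠ 0 := by
    rw [← normSq_eq_conj_mul_self, sub_ne_zero]; exact_mod_cast hw.symm
  have hnum : (z + w) / (1 + conj w * z) + -w = z * (1 - conj w * w) / (1 + conj w * z) := by
    rw [div_add' _ _ _ hD]; ring
  have hden : 1 + conj (-w) * ((z + w) / (1 + conj w * z)) =
      (1 - conj w * w) / (1 + conj w * z) := by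
    rw [← mul_div_assoc, one_add_div hD, map_neg]; ring
  rw [diskMobius, diskMobius, hnum, hden, div_div_div_cancel_right₀ hD,
    mul_div_cancel_right₀ _ hw']

end Complex

open Complex

namespace ContinuousMap

variable {S : Type*} [TopologicalSpace S] [CompactSpace S]

theorem one_add_conj_mul_apply_ne_zero {a f : C(S, ℂ)} (ha : ‖a‖ < 1) (hf : ‖f‖ < 1)
    (s : S) : 1 + conj (a s) * f s ≠ 0 :=
  one_add_conj_mul_ne_zero ((f.norm_coe_le_norm s).trans_lt hf)
    ((a.norm_coe_le_norm s).trans_lt ha)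

noncomputable def unitBallMobius (a : C(S, ℂ)) (ha : ‖a‖ < 1)
    (f : {f : C(S, ℂ) // ‖f‖ < 1}) : {f : C(S, ℂ) // ‖f‖ < 1} :=
  ⟨⟨fun s => diskMobius (a s) (f.1 s),
      (f.1.continuous.add a.continuous).div (by fun_prop)
        (one_add_conj_mul_apply_ne_zero ha f.2)⟩,
    (norm_lt_iff _ one_pos).2 fun s => norm_diskMobius_lt_one
      ((f.1.norm_coe_le_norm s).trans_lt f.2) ((a.norm_coe_le_norm s).trans_lt ha)⟩

theorem leftInverse_unitBallMobius {a b : C(S, ℂ)} (ha : ‖a‖ < 1) (hb : ‖b‖ < 1)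
    (hba : b = -a) : Function.LeftInverse (unitBallMobius b hb) (unitBallMobius a ha) := fun f => by
  subst hba
  exact Subtype.ext <| ext fun s =>
    diskMobius_neg_diskMobius (one_add_conj_mul_apply_ne_zero ha f.2 s)
      (normSq_lt_one_of_norm_lt_one ((a.norm_coe_le_norm s).trans_lt ha)).ne

end ContinuousMap

/-- Let `S` be a compact space and `B` the open unit ball of `C(S, ℂ)` with the sup
norm.  For each `a ∈ B` the map `φ_a(f) = (f + a)/(1 + conj(a) f)` (pointwise
operations, the denominator being nowhere zero) is a well-defined bijection of `B` onto
itself with inverse `φ_{-a}`. -/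
theorem stmt12 {S : Type*} [TopologicalSpace S] [CompactSpace S]
    (a : C(S, ℂ)) (ha : ‖a‖ < 1) :
    (∀ f : C(S, ℂ), ‖f‖ < 1 → ∀ s : S, 1 + conj (a s) * f s ≠ 0) ∧
    ∃ φ ψ : {f : C(S, ℂ) // ‖f‖ < 1} → {f : C(S, ℂ) // ‖f‖ < 1},
      (∀ f s, (φ f : C(S, ℂ)) s =
          ((f : C(S, ℂ)) s + a s) / (1 + conj (a s) * (f : C(S, ℂ)) s)) ∧
      (∀ f s, (ψ f : C(S, ℂ)) s =
          ((f : C(S, ℂ)) s - a s) / (1 + conj (-a s) * (f : C(S, ℂ)) s)) ∧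
      Function.LeftInverse ψ φ ∧ Function.RightInverse ψ φ := by
  have ha' : ‖-a‖ < 1 := by rwa [norm_neg]
  exact ⟨fun f hf => ContinuousMap.one_add_conj_mul_apply_ne_zero ha hf,
    ContinuousMap.unitBallMobius a ha, ContinuousMap.unitBallMobius (-a) ha', fun f s => rfl,
    fun f s => by rw [sub_eq_add_neg]; rfl,
    ContinuousMap.leftInverse_unitBallMobius ha ha' rfl,
    ContinuousMap.leftInverse_unitBallMobius ha' ha (neg_neg a).symm⟩
end
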